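/- arXiv:2108.01822 — 4 statements merged into one kernel-verified Lean document; each statement's English description precedes it below -/
import Mathlib

section
/- The sum over all cube-free positive integers n of μ₃(n)/n² equals ζ(4)·ζ(6)/(ζ(2)·ζ(12)), where ζ is the Riemann zeta function. -/
open scoped Classical

/-- The Möbius function of rank `r`:  `μ_r(n) = (-1)^Ω(n)` if `n` is `r`-free
(no prime `p` has `p^r ∣ n`), and `0` otherwise. -/
noncomputable def muR (r n : ℕ) : ℤ :=
  if ∀ p : ℕ, p.Prime → ¬ p ^ r ∣ n then (-1) ^ (ArithmeticFunction.cardFactors n) else 0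

/-- The Riemann zeta function at a natural-number argument: `ζ(k) = ∑ 1/n^k`. -/
noncomputable def zetaNat (k : ℕ) : ℝ := ∑' n : ℕ, 1 / (n : ℝ) ^ k

section Aux

lemma muR3_zero : muR 3 0 = 0 := by
  rw [muR, if_neg]
  push_neg
  exact ⟨2, Nat.prime_two, dvd_zero _⟩

lemma muR3_one : muR 3 1 = 1 := by
  rw [muR, if_pos]
  · simp
  · intro p hp h
    have h1 : p ^ 3 = 1 := Nat.eq_one_of_dvd_one h
    have h2 : p ≤ p ^ 3 := Nat.le_self_pow (by norm_num) p
    have := hp.one_lt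
    omega

lemma muR3_prime_pow_le {p : ℕ} (hp : p.Prime) {e : ℕ} (he : e ≤ 2) :
    muR 3 (p ^ e) = (-1) ^ e := by
  rw [muR, if_pos, ArithmeticFunction.cardFactors_apply_prime_pow hp]
  intro q hq hdvd
  have hqp : q = p := by
    have : q ∣ p ^ e := dvd_trans (dvd_pow_self q (by norm_num)) hdvd
    exact (Nat.prime_dvd_prime_iff_eq hq hp).mp (hq.dvd_of_dvd_pow this)
  subst hqp
  have := (Nat.pow_dvd_pow_iff_le_right hq.one_lt).mp hdvd
  omega

lemma muR3_prime_pow_ge {p : ℕ} (hp : p.Prime) {e : ℕ} (he : 3 ≤ e) :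
    muR 3 (p ^ e) = 0 := by
  rw [muR, if_neg]
  push_neg
  exact ⟨p, hp, pow_dvd_pow p he⟩

lemma muR3_abs_le (n : ℕ) : |muR 3 n| ≤ 1 := by
  rw [muR]
  split
  · rw [abs_pow, abs_neg, abs_one, one_pow]
  · simp

/-- the summand function -/
noncomputable def F3 : ℕ → ℝ := fun n => (muR 3 n : ℝ) / (n : ℝ) ^ 2

lemma F3_zero : F3 0 = 0 := by simp [F3, muR3_zero]

lemma F3_one : F3 1 = 1 := by simp [F3, muR3_one]

lemma muR3_mul {m n : ℕ} (hm : m ≠ 0) (hn : n ≠ 0) (h : Nat.Coprime m n) :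
    muR 3 (m * n) = muR 3 m * muR 3 n := by
  by_cases hm3 : ∀ p : ℕ, p.Prime → ¬ p ^ 3 ∣ m
  · by_cases hn3 : ∀ p : ℕ, p.Prime → ¬ p ^ 3 ∣ n
    · have hmn3 : ∀ p : ℕ, p.Prime → ¬ p ^ 3 ∣ m * n := by
        intro p hp hdvd
        rcases (Nat.Prime.dvd_mul hp).mp (dvd_trans (dvd_pow_self p (by norm_num)) hdvd) with
          hpm | hpn
        · have hcop : Nat.Coprime (p ^ 3) n :=
            Nat.Coprime.pow_left _ (Nat.Coprime.coprime_dvd_left hpm h)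
          exact hm3 p hp (hcop.dvd_of_dvd_mul_right hdvd)
        · have hcop : Nat.Coprime (p ^ 3) m :=
            Nat.Coprime.pow_left _ (Nat.Coprime.coprime_dvd_right hpn h).symm
          exact hn3 p hp (hcop.dvd_of_dvd_mul_left hdvd)
      rw [muR, if_pos hmn3, muR, if_pos hm3, muR, if_pos hn3,
        ArithmeticFunction.cardFactors_mul hm hn, pow_add]
    · have hbad : ¬ ∀ p : ℕ, p.Prime → ¬ p ^ 3 ∣ m * n := by
        push_neg at hn3 ⊢
        obtain ⟨p, hp, hd⟩ := hn3
        exact ⟨p, hp, hd.mul_left m⟩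
      have hzn : muR 3 n = 0 := by rw [muR, if_neg hn3]
      rw [hzn, mul_zero, muR, if_neg hbad]
  · have hbad : ¬ ∀ p : ℕ, p.Prime → ¬ p ^ 3 ∣ m * n := by
      push_neg at hm3 ⊢
      obtain ⟨p, hp, hd⟩ := hm3
      exact ⟨p, hp, hd.mul_right n⟩
    have hzm : muR 3 m = 0 := by rw [muR, if_neg hm3]
    rw [hzm, zero_mul, muR, if_neg hbad]

lemma F3_mul {m n : ℕ} (h : Nat.Coprime m n) : F3 (m * n) = F3 m * F3 n := by
  rcases eq_or_ne m 0 with rfl | hm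
  · simp [F3_zero, F3]
  rcases eq_or_ne n 0 with rfl | hn
  · simp [F3_zero, F3]
  rw [F3, F3, F3, muR3_mul hm hn h]
  push_cast
  ring

lemma F3_summable : Summable fun n => ‖F3 n‖ := by
  have h : Summable (fun n : ℕ => 1 / (n : ℝ) ^ 2) :=
    Real.summable_one_div_nat_pow.mpr one_lt_two
  refine h.of_nonneg_of_le (fun n => norm_nonneg _) fun n => ?_
  rcases eq_or_ne n 0 with rfl | hn
  · simp [F3_zero]
  rw [F3, norm_div, norm_pow, Real.norm_natCast]
  have h1 : ‖(muR 3 n : ℝ)‖ ≤ 1 := by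
    rw [Real.norm_eq_abs, ← Int.cast_abs]
    exact_mod_cast muR3_abs_le n
  have hn' : (n : ℝ) ≠ 0 := Nat.cast_ne_zero.mpr hn
  gcongr

lemma zeta_summable {k : ℕ} (hk : 1 < k) : Summable (fun n : ℕ => 1 / (n : ℝ) ^ k) :=
  Real.summable_one_div_nat_pow.mpr hk

lemma zeta_hasProd {k : ℕ} (hk : 1 < k) :
    HasProd (fun p : Nat.Primes => (1 - ((p : ℝ) ^ k)⁻¹)⁻¹) (zetaNat k) := by
  let f : ℕ →*₀ ℝ :=
    { toFun := fun n => ((n : ℝ) ^ k)⁻¹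
      map_zero' := by simp [zero_pow (by omega : k ≠ 0)]
      map_one' := by simp
      map_mul' := by intro m n; push_cast; rw [mul_pow, mul_inv] }
  have hsum : Summable fun n => ‖f n‖ := by
    refine (zeta_summable hk).of_nonneg_of_le (fun n => norm_nonneg _) fun n => le_of_eq ?_
    show ‖((n : ℝ) ^ k)⁻¹‖ = 1 / (n : ℝ) ^ k
    rw [Real.norm_eq_abs, abs_inv, abs_pow, Nat.abs_cast, one_div]
  have h := EulerProduct.eulerProduct_completely_multiplicative_hasProd (f := f) hsum
  have heq : zetaNat k = ∑' n, f n := by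
    unfold zetaNat
    congr 1
    funext n
    show 1 / (n : ℝ) ^ k = ((n : ℝ) ^ k)⁻¹
    rw [one_div]
  rw [heq]
  exact h

lemma zeta_pos {k : ℕ} (hk : 1 < k) : 0 < zetaNat k := by
  have hs := zeta_summable hk
  have h1 : (1 : ℝ) = 1 / ((1 : ℕ) : ℝ) ^ k := by norm_num
  calc (0 : ℝ) < 1 := one_pos
    _ = 1 / ((1 : ℕ) : ℝ) ^ k := h1
    _ ≤ zetaNat k := Summable.le_tsum hs 1 fun j _ => by positivity

lemma F3_local {p : ℕ} (hp : p.Prime) :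
    ∑' e : ℕ, F3 (p ^ e) = 1 - ((p : ℝ) ^ 2)⁻¹ + (((p : ℝ) ^ 2)⁻¹) ^ 2 := by
  have hp0 : ((p : ℝ)) ≠ 0 := Nat.cast_ne_zero.mpr hp.pos.ne'
  rw [tsum_eq_sum (s := {0, 1, 2})]
  · have e0 : F3 (p ^ 0) = 1 := by simp [F3_one]
    have e1 : F3 (p ^ 1) = -((p : ℝ) ^ 2)⁻¹ := by
      rw [F3, muR3_prime_pow_le hp (by norm_num)]
      push_cast
      rw [pow_one]
      field_simp
    have e2 : F3 (p ^ 2) = (((p : ℝ) ^ 2)⁻¹) ^ 2 := by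
      rw [F3, muR3_prime_pow_le hp le_rfl]
      push_cast
      field_simp
    rw [Finset.sum_insert (by norm_num), Finset.sum_insert (by norm_num),
      Finset.sum_singleton, e0, e1, e2]
    ring
  · intro e he
    simp only [Finset.mem_insert, Finset.mem_singleton] at he
    push_neg at he
    rw [F3, muR3_prime_pow_ge hp (by omega)]
    simp

lemma F3_hasProd :
    HasProd (fun p : Nat.Primes => 1 - ((p : ℝ) ^ 2)⁻¹ + (((p : ℝ) ^ 2)⁻¹) ^ 2) (∑' n, F3 n) := by
  have h := EulerProduct.eulerProduct_hasProd (f := F3) F3_one (fun {m n} hc => F3_mul hc)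
    F3_summable F3_zero
  have heq : (fun p : Nat.Primes => 1 - ((p : ℝ) ^ 2)⁻¹ + (((p : ℝ) ^ 2)⁻¹) ^ 2)
      = fun p : Nat.Primes => ∑' e : ℕ, F3 ((p : ℕ) ^ e) :=
    funext fun p => (F3_local p.prop).symm
  rw [heq]
  exact h

end Aux

/-- The sum over all cube-free positive integers of `μ₃(n)/n²` equals
`ζ(4)ζ(6)/(ζ(2)ζ(12))`. -/
theorem sum_mu3_div_sq_zeta :
    (∑' n : {n : ℕ // 0 < n ∧ ∀ p : ℕ, p.Prime → ¬ p ^ 3 ∣ n},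
        (muR 3 (n : ℕ) : ℝ) / ((n : ℕ) : ℝ) ^ 2)
      = zetaNat 4 * zetaNat 6 / (zetaNat 2 * zetaNat 12) := by
  -- step 1 : the subtype sum is the full sum of F3
  have hsub : (∑' n : {n : ℕ // 0 < n ∧ ∀ p : ℕ, p.Prime → ¬ p ^ 3 ∣ n},
      (muR 3 (n : ℕ) : ℝ) / ((n : ℕ) : ℝ) ^ 2) = ∑' n, F3 n := by
    refine Eq.trans
      (tsum_subtype {n : ℕ | 0 < n ∧ ∀ p : ℕ, p.Prime → ¬ p ^ 3 ∣ n} F3) ?_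
    congr 1
    funext n
    rw [Set.indicator_apply]
    split_ifs with h
    · rfl
    · rw [Set.mem_setOf_eq] at h
      push_neg at h
      rcases Nat.eq_zero_or_pos n with rfl | hn
      · simp [F3_zero]
      · obtain ⟨p, hp, hd⟩ := h hn
        rw [F3, muR, if_neg (by push_neg; exact ⟨p, hp, hd⟩)]
        simp
  rw [hsub]
  -- step 2 : Euler products
  have h2 := zeta_hasProd (k := 2) one_lt_two
  have h4 := zeta_hasProd (k := 4) (by norm_num)
  have h6 := zeta_hasProd (k := 6) (by norm_num)
  have h12 := zeta_hasProd (k := 12) (by norm_num)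
  have hF := F3_hasProd
  have hL := (hF.mul h2).mul h12
  have hR := h4.mul h6
  -- the local factors agree
  have hfun : (fun p : Nat.Primes => (1 - ((p : ℝ) ^ 4)⁻¹)⁻¹ * (1 - ((p : ℝ) ^ 6)⁻¹)⁻¹)
      = fun p : Nat.Primes =>
        (1 - ((p : ℝ) ^ 2)⁻¹ + (((p : ℝ) ^ 2)⁻¹) ^ 2) * (1 - ((p : ℝ) ^ 2)⁻¹)⁻¹
          * (1 - ((p : ℝ) ^ 12)⁻¹)⁻¹ := by
    funext p
    have hp1 : (1 : ℝ) < (p : ℝ) := by exact_mod_cast p.prop.one_lt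
    have hx : ((p : ℝ) ^ 2)⁻¹ = ((p : ℝ) ^ 2)⁻¹ := rfl
    set x : ℝ := ((p : ℝ) ^ 2)⁻¹ with hxdef
    have hx0 : 0 < x := by rw [hxdef]; positivity
    have hx1 : x < 1 := by
      rw [hxdef, inv_lt_one_iff₀]
      right
      nlinarith
    have hq0 : ((p : ℕ) : ℝ) ≠ 0 := by positivity
    have hp4 : ((p : ℝ) ^ 4)⁻¹ = x ^ 2 := by
      rw [hxdef]; field_simp
    have hp6 : ((p : ℝ) ^ 6)⁻¹ = x ^ 3 := by
      rw [hxdef]; field_simp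
    have hp12 : ((p : ℝ) ^ 12)⁻¹ = x ^ 6 := by
      rw [hxdef]; field_simp
    rw [hp4, hp6, hp12]
    have hlt : ∀ k : ℕ, k ≠ 0 → x ^ k < 1 := fun k hk => pow_lt_one₀ hx0.le hx1 hk
    have d1 : (1 : ℝ) - x ≠ 0 := sub_ne_zero.mpr hx1.ne'
    have d2 : (1 : ℝ) - x ^ 2 ≠ 0 := sub_ne_zero.mpr (hlt 2 (by norm_num)).ne'
    have d3 : (1 : ℝ) - x ^ 3 ≠ 0 := sub_ne_zero.mpr (hlt 3 (by norm_num)).ne'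
    have d6 : (1 : ℝ) - x ^ 6 ≠ 0 := sub_ne_zero.mpr (hlt 6 (by norm_num)).ne'
    field_simp
    ring
  have hkey : zetaNat 4 * zetaNat 6 = (∑' n, F3 n) * zetaNat 2 * zetaNat 12 :=
    HasProd.unique (hfun ▸ hR) hL
  have hz2 := (zeta_pos (k := 2) one_lt_two).ne'
  have hz12 := (zeta_pos (k := 12) (by norm_num)).ne'
  rw [eq_div_iff (mul_ne_zero hz2 hz12)]
  linear_combination -hkey
end

section
/- For every even integer r ≥ 4 and every positive integer n, the Dirichlet convolution (μ_r * 1)(n) = ∑_{d ∣ n} μ_r(d) equals 1 if every prime p dividing n has p-adic valuation of n that is even and strictly less than r, and 0 otherwise. -/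
open scoped Classical

open Finset ArithmeticFunction in
noncomputable def muRF (r : ℕ) : ArithmeticFunction ℤ :=
  ⟨muR r, by
    unfold muR
    rw [if_neg]
    push_neg
    exact ⟨2, Nat.prime_two, dvd_zero _⟩⟩

noncomputable def indR (r : ℕ) : ArithmeticFunction ℤ :=
  ⟨fun n => if n ≠ 0 ∧ ∀ p : ℕ, p.Prime → p ∣ n →
      Even (n.factorization p) ∧ n.factorization p < r then 1 else 0,
   by simp⟩

lemma muRF_isMult (r : ℕ) (hr : 1 ≤ r) : (muRF r).IsMultiplicative := by
  constructor
  · show muR r 1 = 1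
    unfold muR
    rw [if_pos, ArithmeticFunction.cardFactors_one, pow_zero]
    intro p hp hd
    have : p ^ r = 1 := Nat.eq_one_of_dvd_one hd
    have h1 : 1 < p ^ r := lt_of_lt_of_le hp.one_lt (Nat.le_self_pow (by omega) p)
    omega
  · intro m n hmn
    show muR r (m * n) = muR r m * muR r n
    have muR_zero : muR r 0 = 0 := by
      unfold muR; rw [if_neg]; push_neg; exact ⟨2, Nat.prime_two, dvd_zero _⟩
    rcases eq_or_ne m 0 with rfl | hm0
    · have hn1 : n = 1 := Nat.coprime_zero_left n |>.mp hmn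
      subst hn1; rw [zero_mul, muR_zero, zero_mul]
    rcases eq_or_ne n 0 with rfl | hn0
    · have hm1 : m = 1 := Nat.coprime_zero_right m |>.mp hmn
      subst hm1; rw [one_mul, muR_zero, mul_zero]
    have hiff : (∀ p : ℕ, p.Prime → ¬ p ^ r ∣ m * n) ↔
        (∀ p : ℕ, p.Prime → ¬ p ^ r ∣ m) ∧ (∀ p : ℕ, p.Prime → ¬ p ^ r ∣ n) := by
      constructor
      · exact fun h => ⟨fun p hp hd => h p hp (hd.mul_right n),
          fun p hp hd => h p hp (hd.mul_left m)⟩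
      · rintro ⟨h1, h2⟩ p hp hd
        rw [hp.pow_dvd_iff_le_factorization (mul_ne_zero hm0 hn0),
          Nat.factorization_mul hm0 hn0, Finsupp.add_apply] at hd
        rcases Nat.eq_zero_or_pos (m.factorization p) with hz | hpos
        · exact h2 p hp ((hp.pow_dvd_iff_le_factorization hn0).mpr (by omega))
        · have hpm : p ∣ m := hp.dvd_iff_one_le_factorization hm0 |>.mpr hpos
          have hpn : ¬ p ∣ n := (hp.coprime_iff_not_dvd).mp (hmn.coprime_dvd_left hpm)
          have : n.factorization p = 0 := Nat.factorization_eq_zero_of_not_dvd hpn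
          exact h1 p hp ((hp.pow_dvd_iff_le_factorization hm0).mpr (by omega))
    unfold muR
    by_cases h : (∀ p : ℕ, p.Prime → ¬ p ^ r ∣ m) ∧ (∀ p : ℕ, p.Prime → ¬ p ^ r ∣ n)
    · rw [if_pos (hiff.mpr h), if_pos h.1, if_pos h.2, ← pow_add,
        ArithmeticFunction.cardFactors_mul hm0 hn0]
    · rw [if_neg (fun hh => h (hiff.mp hh))]
      rcases not_and_or.mp h with h1 | h2
      · rw [if_neg h1, zero_mul]
      · rw [if_neg h2, mul_zero]

lemma indR_isMult (r : ℕ) : (indR r).IsMultiplicative := by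
  have hco : ∀ m : ℕ, indR r m = if m ≠ 0 ∧ ∀ p : ℕ, p.Prime → p ∣ m →
      Even (m.factorization p) ∧ m.factorization p < r then 1 else 0 := fun m => rfl
  constructor
  · rw [hco, if_pos]
    exact ⟨one_ne_zero, fun p hp hd =>
      absurd (Nat.le_of_dvd one_pos hd) (Nat.not_le.mpr hp.one_lt)⟩
  · intro m n hmn
    rw [hco, hco, hco]
    rcases eq_or_ne m 0 with rfl | hm0
    · simp
    rcases eq_or_ne n 0 with rfl | hn0
    · simp
    have key : ∀ p : ℕ, p.Prime → p ∣ m → ¬ p ∣ n := fun p hp hpm =>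
      (hp.coprime_iff_not_dvd).mp (hmn.coprime_dvd_left hpm)
    have hfm : ∀ p : ℕ, p.Prime → p ∣ m → (m * n).factorization p = m.factorization p := by
      intro p hp hpm
      rw [Nat.factorization_mul hm0 hn0, Finsupp.add_apply,
        Nat.factorization_eq_zero_of_not_dvd (key p hp hpm), add_zero]
    have hfn : ∀ p : ℕ, p.Prime → p ∣ n → (m * n).factorization p = n.factorization p := by
      intro p hp hpn
      have : ¬ p ∣ m := fun hpm => key p hp hpm hpn
      rw [Nat.factorization_mul hm0 hn0, Finsupp.add_apply,
        Nat.factorization_eq_zero_of_not_dvd this, zero_add]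
    have hiff : (m * n ≠ 0 ∧ ∀ p : ℕ, p.Prime → p ∣ m * n →
          Even ((m * n).factorization p) ∧ (m * n).factorization p < r) ↔
        (m ≠ 0 ∧ ∀ p : ℕ, p.Prime → p ∣ m →
          Even (m.factorization p) ∧ m.factorization p < r) ∧
        (n ≠ 0 ∧ ∀ p : ℕ, p.Prime → p ∣ n →
          Even (n.factorization p) ∧ n.factorization p < r) := by
      constructor
      · rintro ⟨-, h⟩
        refine ⟨⟨hm0, fun p hp hpm => ?_⟩, ⟨hn0, fun p hp hpn => ?_⟩⟩
        · have := h p hp (hpm.mul_right n); rwa [hfm p hp hpm] at this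
        · have := h p hp (hpn.mul_left m); rwa [hfn p hp hpn] at this
      · rintro ⟨⟨-, h1⟩, ⟨-, h2⟩⟩
        refine ⟨mul_ne_zero hm0 hn0, fun p hp hd => ?_⟩
        rcases hp.dvd_mul.mp hd with hpm | hpn
        · rw [hfm p hp hpm]; exact h1 p hp hpm
        · rw [hfn p hp hpn]; exact h2 p hp hpn
    by_cases h : (m ≠ 0 ∧ ∀ p : ℕ, p.Prime → p ∣ m →
          Even (m.factorization p) ∧ m.factorization p < r) ∧
        (n ≠ 0 ∧ ∀ p : ℕ, p.Prime → p ∣ n →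
          Even (n.factorization p) ∧ n.factorization p < r)
    · rw [if_pos (hiff.mpr h), if_pos h.1, if_pos h.2, one_mul]
    · rw [if_neg (fun hh => h (hiff.mp hh))]
      rcases not_and_or.mp h with h1 | h2
      · rw [if_neg h1, zero_mul]
      · rw [if_neg h2, mul_zero]

open Finset in
lemma left_prime_pow (r : ℕ) (hr : 4 ≤ r) (heven : Even r) {p : ℕ} (hp : p.Prime) (k : ℕ) :
    ((ArithmeticFunction.zeta : ArithmeticFunction ℤ) * muRF r) (p ^ k) =
      if Even k ∧ k < r then 1 else 0 := by
  have hcast : ((ArithmeticFunction.zeta : ArithmeticFunction ℤ) * muRF r) (p ^ k)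
      = ∑ i ∈ (p ^ k).divisors, muR r i := by
    rw [show (ArithmeticFunction.zeta : ArithmeticFunction ℤ)
        = ((ArithmeticFunction.zeta : ArithmeticFunction ℕ) : ArithmeticFunction ℤ) by
      ext n; simp]
    exact ArithmeticFunction.coe_zeta_mul_apply
  rw [hcast, Nat.sum_divisors_prime_pow hp]
  have hval : ∀ i : ℕ, muR r (p ^ i) = if i < r then (-1 : ℤ) ^ i else 0 := by
    intro i
    unfold muR
    by_cases hi : i < r
    · rw [if_pos, if_pos hi, ArithmeticFunction.cardFactors_apply_prime_pow hp]
      intro q hq hd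
      have hq1 : q ∣ p ^ i := (dvd_pow_self q (by omega : r ≠ 0)).trans hd
      have hqp : q = p := (Nat.prime_dvd_prime_iff_eq hq hp).mp (hq.dvd_of_dvd_pow hq1)
      subst hqp
      have := (Nat.pow_dvd_pow_iff_le_right hq.one_lt).mp hd
      omega
    · rw [if_neg, if_neg hi]
      push_neg
      exact ⟨p, hp, pow_dvd_pow p (by omega)⟩
  simp only [hval]
  by_cases hk : k < r
  · rw [Finset.sum_congr rfl (fun x hx => if_pos (by
      have := Finset.mem_range.mp hx; omega)), neg_one_geom_sum]
    by_cases he : Even k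
    · rw [if_neg (by simp [Nat.even_add_one, he]), if_pos ⟨he, hk⟩]
    · rw [if_pos (by simp [Nat.even_add_one, he]), if_neg (fun h => he h.1)]
  · have hfil : (range (k + 1)).filter (· < r) = range r := by
      ext x; simp only [mem_filter, mem_range]; omega
    rw [← Finset.sum_filter, hfil, neg_one_geom_sum, if_pos heven,
      if_neg (fun h => hk h.2)]

lemma right_prime_pow (r : ℕ) (hr : 4 ≤ r) {p : ℕ} (hp : p.Prime) (k : ℕ) :
    indR r (p ^ k) = if Even k ∧ k < r then 1 else 0 := by
  have hco : indR r (p ^ k) = if (p ^ k : ℕ) ≠ 0 ∧ ∀ q : ℕ, q.Prime → q ∣ p ^ k →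
      Even ((p ^ k).factorization q) ∧ (p ^ k).factorization q < r then 1 else 0 := rfl
  rw [hco]
  rcases eq_or_ne k 0 with rfl | hk0
  · rw [if_pos, if_pos ⟨Even.zero, by omega⟩]
    refine ⟨by simp, fun q hq hd => absurd (Nat.le_of_dvd one_pos (by simpa using hd)) ?_⟩
    have := hq.one_lt; omega
  have hiff : ((p ^ k : ℕ) ≠ 0 ∧ ∀ q : ℕ, q.Prime → q ∣ p ^ k →
        Even ((p ^ k).factorization q) ∧ (p ^ k).factorization q < r) ↔
      (Even k ∧ k < r) := by
    have hfp : (p ^ k).factorization p = k := by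
      rw [hp.factorization_pow]; simp
    constructor
    · rintro ⟨-, h⟩
      have := h p hp (dvd_pow_self p hk0)
      rwa [hfp] at this
    · intro hEk
      refine ⟨pow_ne_zero k hp.pos.ne', fun q hq hd => ?_⟩
      have hqp : q = p := (Nat.prime_dvd_prime_iff_eq hq hp).mp (hq.dvd_of_dvd_pow hd)
      subst hqp
      rwa [hfp]
  by_cases h : Even k ∧ k < r
  · rw [if_pos (hiff.mpr h), if_pos h]
  · rw [if_neg (fun hh => h (hiff.mp hh)), if_neg h]

/-- For every even `r ≥ 4` and every positive integer `n`, the Dirichlet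
convolution `(μ_r * 1)(n) = ∑_{d ∣ n} μ_r(d)` equals `1` if every prime `p`
dividing `n` has even `p`-adic valuation strictly less than `r`, and `0`
otherwise. -/
theorem muR_convolution_one_even_rank (r : ℕ) (hr : 4 ≤ r) (heven : Even r)
    (n : ℕ) (hn : 0 < n) :
    (∑ d ∈ n.divisors, muR r d) =
      if ∀ p : ℕ, p.Prime → p ∣ n →
          Even (n.factorization p) ∧ n.factorization p < r
      then 1 else 0 := by
  have hzmult : ((ArithmeticFunction.zeta : ArithmeticFunction ℤ)).IsMultiplicative := by
    rw [show (ArithmeticFunction.zeta : ArithmeticFunction ℤ)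
        = ((ArithmeticFunction.zeta : ArithmeticFunction ℕ) : ArithmeticFunction ℤ) by
      ext n; simp]
    exact ArithmeticFunction.isMultiplicative_zeta.natCast
  have hmul := hzmult.mul (muRF_isMult r (by omega))
  have heq : (ArithmeticFunction.zeta : ArithmeticFunction ℤ) * muRF r = indR r := by
    rw [ArithmeticFunction.IsMultiplicative.eq_iff_eq_on_prime_powers _ hmul _ (indR_isMult r)]
    intro p i hp
    rw [left_prime_pow r hr heven hp i, right_prime_pow r hr hp i]
  have hL : ((ArithmeticFunction.zeta : ArithmeticFunction ℤ) * muRF r) n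
      = ∑ d ∈ n.divisors, muR r d := by
    rw [show (ArithmeticFunction.zeta : ArithmeticFunction ℤ)
        = ((ArithmeticFunction.zeta : ArithmeticFunction ℕ) : ArithmeticFunction ℤ) by
      ext n; simp]
    exact ArithmeticFunction.coe_zeta_mul_apply
  have hR : indR r n = if ∀ p : ℕ, p.Prime → p ∣ n →
      Even (n.factorization p) ∧ n.factorization p < r then 1 else 0 := by
    have hco : indR r n = if n ≠ 0 ∧ ∀ p : ℕ, p.Prime → p ∣ n →
        Even (n.factorization p) ∧ n.factorization p < r then 1 else 0 := rfl
    rw [hco]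
    by_cases h : ∀ p : ℕ, p.Prime → p ∣ n →
        Even (n.factorization p) ∧ n.factorization p < r
    · rw [if_pos ⟨hn.ne', h⟩, if_pos h]
    · rw [if_neg (fun hh => h hh.2), if_neg h]
  rw [← hL, heq, hR]
end

section
/- Let μ₃⁻¹ denote the Dirichlet inverse of the rank-3 Möbius function μ₃. Then for every prime p and integer m ≥ 0, μ₃⁻¹(p^m) = 1 if m ≡ 0 or 1 (mod 6), μ₃⁻¹(p^m) = 0 if m ≡ 2 or 5 (mod 6), and μ₃⁻¹(p^m) = −1 if m ≡ 3 or 4 (mod 6). -/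
open scoped Classical

/-!
On powers of a prime `p`, `μ₃` takes the values `1, -1, 1, 0, 0, …`, so the inversion identity
at `p^k` says that `a k := μ₃⁻¹(p^k)` satisfies `a 0 = a 1 = 1` and `a (k+2) = a (k+1) - a k`.
Hence `a (k+3) = -a k`, the sequence has period `6`, and it reads `1, 1, 0, -1, -1, 0`.
-/

section ThreeTermRecurrence

variable {G : Type*} [AddCommGroup G] {a : ℕ → G}

lemma add_three_eq_neg_of_add_two_eq_sub (h : ∀ n, a (n + 2) = a (n + 1) - a n) (n : ℕ) :
    a (n + 3) = -a n := by
  rw [h (n + 1), h n]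
  abel

lemma periodic_six_of_add_two_eq_sub (h : ∀ n, a (n + 2) = a (n + 1) - a n) :
    Function.Periodic a 6 := fun n => by
  rw [add_three_eq_neg_of_add_two_eq_sub h (n + 3), add_three_eq_neg_of_add_two_eq_sub h n,
    neg_neg]

end ThreeTermRecurrence

lemma eq_ite_mod_six_of_add_two_eq_sub {a : ℕ → ℤ} (h₀ : a 0 = 1) (h₁ : a 1 = 1)
    (h : ∀ n, a (n + 2) = a (n + 1) - a n) (m : ℕ) :
    a m = if m % 6 = 0 ∨ m % 6 = 1 then 1 else if m % 6 = 2 ∨ m % 6 = 5 then 0 else -1 := by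
  rw [← (periodic_six_of_add_two_eq_sub h).map_mod_nat m]
  have h₂ : a 2 = 0 := by simpa [h₀, h₁] using h 0
  have h₃ : a 3 = -1 := by simpa [h₁, h₂] using h 1
  have h₄ : a 4 = -1 := by simpa [h₂, h₃] using h 2
  have h₅ : a 5 = 0 := by simpa [h₃, h₄] using h 3
  have : m % 6 < 6 := Nat.mod_lt m (by norm_num)
  interval_cases m % 6 <;> simp [h₀, h₁, h₂, h₃, h₄, h₅]

lemma forall_prime_not_pow_dvd_prime_pow_iff {p : ℕ} (hp : p.Prime) (r i : ℕ) :
    (∀ q : ℕ, q.Prime → ¬ q ^ r ∣ p ^ i) ↔ i < r := by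
  refine ⟨fun h => ?_, fun hi q hq hdvd => ?_⟩
  · by_contra! hri
    exact h p hp (pow_dvd_pow p hri)
  · have hr : r ≠ 0 := by omega
    have hqp : q = p :=
      (Nat.prime_dvd_prime_iff_eq hq hp).mp (hq.dvd_of_dvd_pow ((dvd_pow_self q hr).trans hdvd))
    subst hqp
    exact absurd ((Nat.pow_dvd_pow_iff_le_right hq.one_lt).mp hdvd) (by omega)

lemma muR_prime_pow {p : ℕ} (hp : p.Prime) (r i : ℕ) :
    muR r (p ^ i) = if i < r then (-1) ^ i else 0 := by
  simp only [muR, forall_prime_not_pow_dvd_prime_pow_iff hp,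
    ArithmeticFunction.cardFactors_apply_prime_pow hp]

lemma sum_range_muR_mul_prime_pow {r : ℕ} {g : ℕ → ℤ}
    (hg : ∀ n : ℕ, 0 < n → (∑ d ∈ n.divisors, muR r d * g (n / d)) = if n = 1 then 1 else 0)
    {p : ℕ} (hp : p.Prime) (k : ℕ) :
    ∑ i ∈ Finset.range (k + 1), muR r (p ^ i) * g (p ^ (k - i)) = if k = 0 then 1 else 0 := by
  have h := hg (p ^ k) (pow_pos hp.pos k)
  simp only [Nat.sum_divisors_prime_pow hp, Nat.pow_eq_one, hp.ne_one, false_or] at h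
  rw [← h]
  refine Finset.sum_congr rfl fun i hi => ?_
  rw [Nat.pow_div (Finset.mem_range_succ_iff.mp hi) hp.pos]

lemma apply_prime_pow_add_two_eq_sub_of_muR_three {g : ℕ → ℤ}
    (hg : ∀ n : ℕ, 0 < n → (∑ d ∈ n.divisors, muR 3 d * g (n / d)) = if n = 1 then 1 else 0)
    {p : ℕ} (hp : p.Prime) (k : ℕ) :
    g (p ^ (k + 2)) = g (p ^ (k + 1)) - g (p ^ k) := by
  have h := sum_range_muR_mul_prime_pow hg hp (k + 2)
  rw [← Finset.sum_subset (Finset.range_subset_range.2 (by omega : 3 ≤ k + 2 + 1))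
    fun i _ hi => by rw [muR_prime_pow hp, if_neg (by simpa using hi), zero_mul]] at h
  have h' : g (p ^ (k + 2)) - g (p ^ (k + 1)) + g (p ^ k) = 0 := by
    simpa [Finset.sum_range_succ, muR_prime_pow hp, sub_eq_add_neg] using h
  linarith

/-- Values of the Dirichlet inverse `μ₃⁻¹` of the rank-3 Möbius function at
prime powers: `1` if `m ≡ 0, 1 (mod 6)`, `0` if `m ≡ 2, 5 (mod 6)`, and `-1` if
`m ≡ 3, 4 (mod 6)`.  The Dirichlet inverse is characterized by
`∑_{d ∣ n} μ₃(d)·g(n/d) = [n = 1]` for all `n ≥ 1`. -/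
theorem mu3_inv_prime_pow (g : ℕ → ℤ)
    (hg : ∀ n : ℕ, 0 < n →
      (∑ d ∈ n.divisors, muR 3 d * g (n / d)) = if n = 1 then 1 else 0)
    (p : ℕ) (hp : p.Prime) (m : ℕ) :
    g (p ^ m) =
      if m % 6 = 0 ∨ m % 6 = 1 then 1
      else if m % 6 = 2 ∨ m % 6 = 5 then 0
      else -1 := by
  have h₀ : g (p ^ 0) = 1 := by
    simpa [muR_prime_pow hp] using sum_range_muR_mul_prime_pow hg hp 0
  have h₁ : g (p ^ 1) = 1 := by
    have h : g (p ^ 1) - g (p ^ 0) = 0 := by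
      simpa [Finset.sum_range_succ, muR_prime_pow hp, sub_eq_add_neg]
        using sum_range_muR_mul_prime_pow hg hp 1
    linarith
  exact eq_ite_mod_six_of_add_two_eq_sub (a := fun k => g (p ^ k)) h₀ h₁
    (apply_prime_pow_add_two_eq_sub_of_muR_three hg hp) m
end

section
/- Let μ₃⁻¹ denote the Dirichlet inverse of the rank-3 Möbius function μ₃, and for n = p₁^{m₁}⋯p_k^{m_k} put m_*(n) = #{ j : m_j ≡ 3 or 4 (mod 6) }. Then for every real s > 1, ∑_{n=1}^∞ μ₃⁻¹(n)/n^s = ∑_n (−1)^{m_*(n)} / n^s, where the right-hand sum runs over positive integers n all of whose prime exponents are ≢ 2 and ≢ 5 (mod 6); equivalently, (∑_{n=1}^∞ μ₃(n)/n^s)⁻¹ equals that right-hand sum. -/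
/-!
`μ₃` is multiplicative with Euler factor `1 - X + X²` at every prime (`X = p⁻ˢ`), so its
Dirichlet inverse is the multiplicative function whose value at `p ^ k` is the `k`-th
coefficient of `(1 - X + X²)⁻¹ = (1 + X) / (1 + X³)`, i.e. `1, 1, 0, -1, -1, 0` according to
`k mod 6`; at a general `n` this is `(-1) ^ m_*(n)` or `0`. Dirichlet inverses are unique, so
`g` is this function. For `s > 1` both Dirichlet series have bounded coefficients, hence
converge absolutely, and the series of a Dirichlet convolution is the product of the series.
-/

open scoped Classical

/-- `m_*(n)` is the number of primes `p` whose exponent in `n` is `≡ 3` or `4`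
modulo `6`. -/
def mStar (n : ℕ) : ℕ :=
  (n.primeFactors.filter
    (fun p => n.factorization p % 6 = 3 ∨ n.factorization p % 6 = 4)).card

open ArithmeticFunction

namespace ArithmeticFunction

variable {R : Type*}

lemma mul_apply_prime_pow [Semiring R] (f g : ArithmeticFunction R) {p : ℕ} (hp : p.Prime)
    (i : ℕ) : (f * g) (p ^ i) = ∑ j ∈ Finset.range (i + 1), f (p ^ j) * g (p ^ (i - j)) := by
  rw [mul_apply, Nat.sum_divisorsAntidiagonal (fun a b => f a * g b),
    Nat.sum_divisors_prime_pow hp]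
  refine Finset.sum_congr rfl fun j hj => ?_
  rw [Nat.pow_div (Nat.lt_succ_iff.mp (Finset.mem_range.mp hj)) hp.pos]

lemma eq_of_mul_eq_one_of_sum_divisors [CommRing R] {f h : ArithmeticFunction R}
    (hfh : f * h = 1) {g : ℕ → R}
    (hg : ∀ n, 0 < n → ∑ d ∈ n.divisors, f d * g (n / d) = if n = 1 then 1 else 0)
    {n : ℕ} (hn : 0 < n) : g n = h n := by
  let G : ArithmeticFunction R := ⟨fun n => if n = 0 then 0 else g n, if_pos rfl⟩
  have hfG : f * G = 1 := by
    ext m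
    rcases m.eq_zero_or_pos with rfl | hm
    · simp
    rw [mul_apply, Nat.sum_divisorsAntidiagonal (fun a b => f a * G b), one_apply, ← hg m hm]
    refine Finset.sum_congr rfl fun d hd => ?_
    have hquot : m / d ≠ 0 := (Nat.div_pos (Nat.divisor_le hd) (Nat.pos_of_mem_divisors hd)).ne'
    simp [G, hquot]
  have hGh : G = h := left_inv_eq_right_inv (mul_comm G f ▸ hfG) hfh
  simpa [G, hn.ne'] using congr($hGh n)

section OfPrimePowers

variable [CommMonoidWithZero R] (c : ℕ → R)

noncomputable def ofPrimePowers : ArithmeticFunction R :=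
  ⟨fun n => if n = 0 then 0 else n.factorization.prod fun _ k => c k, if_pos rfl⟩

variable {c}

lemma ofPrimePowers_apply {n : ℕ} (hn : n ≠ 0) :
    ofPrimePowers c n = n.factorization.prod fun _ k => c k :=
  if_neg hn

lemma isMultiplicative_ofPrimePowers : (ofPrimePowers c).IsMultiplicative := by
  rw [IsMultiplicative.iff_ne_zero]
  refine ⟨by simp [ofPrimePowers_apply], fun {m n} hm hn hmn => ?_⟩
  rw [ofPrimePowers_apply (mul_ne_zero hm hn), ofPrimePowers_apply hm, ofPrimePowers_apply hn,
    Nat.factorization_mul_of_coprime hmn,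
    Finsupp.prod_add_index_of_disjoint hmn.disjoint_primeFactors]

lemma ofPrimePowers_apply_prime_pow (hc : c 0 = 1) {p : ℕ} (hp : p.Prime) (k : ℕ) :
    ofPrimePowers c (p ^ k) = c k := by
  rw [ofPrimePowers_apply (pow_ne_zero k hp.ne_zero), hp.factorization_pow,
    Finsupp.prod_single_index hc]

end OfPrimePowers

end ArithmeticFunction

-- `s ≠ 0` because at `s = 0` the real series picks up the term `f 0 / 0 ^ 0 = f 0`.
lemma LSeries_ofReal (f : ℕ → ℝ) {s : ℝ} (hs : s ≠ 0) :
    LSeries (fun n => (f n : ℂ)) s = ((∑' n, f n / (n : ℝ) ^ s : ℝ) : ℂ) := by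
  rw [Complex.ofReal_tsum]
  refine tsum_congr fun n => ?_
  rcases eq_or_ne n 0 with rfl | hn
  · simp [Real.zero_rpow hs]
  · rw [LSeries.term_of_ne_zero hn, Complex.ofReal_div, Complex.ofReal_cpow (Nat.cast_nonneg n)]
    norm_num

lemma tsum_div_rpow_mul_tsum_div_rpow_of_mul_eq_one {f g : ArithmeticFunction ℤ}
    (hfg : f * g = 1) {C : ℝ} (hf : ∀ n, |(f n : ℝ)| ≤ C) (hg : ∀ n, |(g n : ℝ)| ≤ C)
    {s : ℝ} (hs : 1 < s) :
    (∑' n, (f n : ℝ) / (n : ℝ) ^ s) * (∑' n, (g n : ℝ) / (n : ℝ) ^ s) = 1 := by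
  have hLSeries := LSeries_mul' (f := (f : ArithmeticFunction ℂ)) (g := g) (s := s)
    (LSeriesSummable_of_bounded_of_one_lt_real (fun n _ => by simpa using hf n) hs)
    (LSeriesSummable_of_bounded_of_one_lt_real (fun n _ => by simpa using hg n) hs)
  rw [← intCoe_mul, hfg, intCoe_one, one_eq_delta, LSeries_delta, Pi.one_apply] at hLSeries
  have hs0 : s ≠ 0 := by linarith
  have hfL := LSeries_ofReal (fun n => (f n : ℝ)) hs0
  have hgL := LSeries_ofReal (fun n => (g n : ℝ)) hs0
  simp only [Complex.ofReal_intCast] at hfL hgL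
  simp only [intCoe_apply, hfL, hgL] at hLSeries
  exact_mod_cast hLSeries.symm

lemma muR_zero (r : ℕ) : muR r 0 = 0 :=
  if_neg fun h => h 2 Nat.prime_two (dvd_zero _)

lemma muR_apply_prime_pow (r : ℕ) {p : ℕ} (hp : p.Prime) (i : ℕ) :
    muR r (p ^ i) = if i < r then (-1) ^ i else 0 := by
  have hfree : (∀ q : ℕ, q.Prime → ¬ q ^ r ∣ p ^ i) ↔ i < r := by
    refine ⟨fun h => not_le.mp fun hri => h p hp (pow_dvd_pow p hri), fun hi q hq hdvd => ?_⟩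
    rw [hq.pow_dvd_iff_le_factorization (pow_ne_zero i hp.ne_zero), hp.factorization_pow,
      Finsupp.single_apply] at hdvd
    split_ifs at hdvd <;> omega
  rw [muR, cardFactors_apply_prime_pow hp]
  exact if_congr hfree rfl rfl

lemma muR_mul {r : ℕ} (hr : r ≠ 0) {m n : ℕ} (hmn : m.Coprime n) :
    muR r (m * n) = muR r m * muR r n := by
  have hfree : (∀ p : ℕ, p.Prime → ¬ p ^ r ∣ m * n) ↔
      (∀ p : ℕ, p.Prime → ¬ p ^ r ∣ m) ∧ ∀ p : ℕ, p.Prime → ¬ p ^ r ∣ n := by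
    simp only [← forall_and, ← not_or]
    refine forall₂_congr fun p hp => ?_
    rw [hmn.isPrimePow_dvd_mul (hp.isPrimePow.pow hr)]
  rcases eq_or_ne m 0 with rfl | hm
  · simp [muR_zero]
  rcases eq_or_ne n 0 with rfl | hn
  · simp [muR_zero]
  simp only [muR, hfree, cardFactors_mul hm hn, pow_add]
  split_ifs <;> simp_all

lemma abs_muR_le_one (r n : ℕ) : |(muR r n : ℝ)| ≤ 1 := by
  unfold muR
  split_ifs <;> simp

noncomputable def rankMoebius (r : ℕ) : ArithmeticFunction ℤ := ⟨muR r, muR_zero r⟩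

@[simp]
lemma rankMoebius_apply (r n : ℕ) : rankMoebius r n = muR r n := rfl

lemma isMultiplicative_rankMoebius {r : ℕ} (hr : r ≠ 0) : (rankMoebius r).IsMultiplicative :=
  ⟨by simpa [Nat.pos_of_ne_zero hr] using muR_apply_prime_pow r Nat.prime_two 0, muR_mul hr⟩

/-- The coefficients of `(1 - X + X²)⁻¹ = (1 + X) / (1 + X³)`. -/
def mu3InvCoeff (k : ℕ) : ℤ :=
  if k % 6 = 2 ∨ k % 6 = 5 then 0 else if k % 6 = 3 ∨ k % 6 = 4 then -1 else 1

lemma mu3InvCoeff_add_two (k : ℕ) :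
    mu3InvCoeff (k + 2) = mu3InvCoeff (k + 1) - mu3InvCoeff k := by
  simp only [mu3InvCoeff]
  split_ifs <;> omega

noncomputable def mu3Inv : ArithmeticFunction ℤ := ofPrimePowers mu3InvCoeff

lemma rankMoebius_three_mul_mu3Inv : rankMoebius 3 * mu3Inv = 1 := by
  rw [mu3Inv, IsMultiplicative.eq_iff_eq_on_prime_powers _
    ((isMultiplicative_rankMoebius three_ne_zero).mul isMultiplicative_ofPrimePowers) _
    isMultiplicative_one]
  intro p i hp
  have hc : mu3InvCoeff 0 = 1 := rfl
  simp only [mul_apply_prime_pow _ _ hp, rankMoebius_apply, muR_apply_prime_pow 3 hp,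
    ofPrimePowers_apply_prime_pow hc hp, one_apply, Nat.pow_eq_one, hp.ne_one, false_or]
  rcases i with _ | _ | k
  · rfl
  · rfl
  · rw [Finset.sum_range_succ', Finset.sum_range_succ', Finset.sum_range_succ',
      Finset.sum_eq_zero fun j _ => by rw [if_neg (by omega), zero_mul]]
    norm_num [show k + 1 + 1 - 2 = k by omega, mu3InvCoeff_add_two k]
    ring

lemma mu3Inv_apply {n : ℕ} (hn : n ≠ 0) :
    mu3Inv n = if ∀ p : ℕ, p.Prime → n.factorization p % 6 ≠ 2 ∧ n.factorization p % 6 ≠ 5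
      then (-1) ^ mStar n else 0 := by
  rw [mu3Inv, ofPrimePowers_apply hn, Nat.prod_factorization_eq_prod_primeFactors]
  split_ifs with hgood
  · have hcoeff : ∀ p ∈ n.primeFactors, mu3InvCoeff (n.factorization p) =
        if n.factorization p % 6 = 3 ∨ n.factorization p % 6 = 4 then -1 else 1 := fun p hp =>
      if_neg (by have := hgood p (Nat.prime_of_mem_primeFactors hp); omega)
    rw [Finset.prod_congr rfl hcoeff, Finset.prod_ite, Finset.prod_const, Finset.prod_const,
      one_pow, mul_one, mStar]
  · push Not at hgood
    obtain ⟨p, hp, hexp⟩ := hgood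
    have hpos : n.factorization p ≠ 0 := by omega
    refine Finset.prod_eq_zero (Finsupp.mem_support_iff.mpr hpos) ?_
    simp only [mu3InvCoeff]
    omega

lemma abs_mu3Inv_le_one (n : ℕ) : |(mu3Inv n : ℝ)| ≤ 1 := by
  rcases eq_or_ne n 0 with rfl | hn
  · simp
  rw [mu3Inv_apply hn]
  split_ifs <;> simp

lemma tsum_mu3Inv_div_rpow {s : ℝ} (hs : s ≠ 0) :
    ∑' n : ℕ, (mu3Inv n : ℝ) / (n : ℝ) ^ s
      = ∑' n : {n : ℕ // 0 < n ∧ ∀ p : ℕ, p.Prime →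
          n.factorization p % 6 ≠ 2 ∧ n.factorization p % 6 ≠ 5},
        ((-1 : ℝ) ^ mStar (n : ℕ)) / ((n : ℕ) : ℝ) ^ s := by
  refine (tsum_congr fun n => ?_).trans (tsum_subtype {n : ℕ | 0 < n ∧ ∀ p : ℕ, p.Prime →
    n.factorization p % 6 ≠ 2 ∧ n.factorization p % 6 ≠ 5}
      fun n => (-1 : ℝ) ^ mStar n / (n : ℝ) ^ s).symm
  rcases eq_or_ne n 0 with rfl | hn
  · simp [Real.zero_rpow hs]
  rw [mu3Inv_apply hn, Set.indicator_apply]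
  simp only [Set.mem_ofPred_eq, Nat.pos_of_ne_zero hn, true_and]
  split_ifs <;> simp

/-- Möbius inversion of rank 3: if `g` is the Dirichlet inverse of `μ₃`
(i.e. `∑_{d ∣ n} μ₃(d)·g(n/d) = [n = 1]` for all `n ≥ 1`), then for every real
`s > 1`, `∑ g(n)/n^s` equals `∑ (-1)^{m_*(n)}/n^s`, the latter sum running over
positive integers all of whose prime exponents are `≢ 2, 5 (mod 6)`;
equivalently `(∑ μ₃(n)/n^s)⁻¹` equals that sum. -/
theorem mu3_inversion (g : ℕ → ℝ)
    (hg : ∀ n : ℕ, 0 < n →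
      (∑ d ∈ n.divisors, (muR 3 d : ℝ) * g (n / d)) = if n = 1 then 1 else 0)
    (s : ℝ) (hs : 1 < s) :
    (∑' n : ℕ, g n / (n : ℝ) ^ s)
        = (∑' n : {n : ℕ // 0 < n ∧ ∀ p : ℕ, p.Prime →
              n.factorization p % 6 ≠ 2 ∧ n.factorization p % 6 ≠ 5},
            ((-1 : ℝ) ^ mStar (n : ℕ)) / ((n : ℕ) : ℝ) ^ s) ∧
      (∑' n : ℕ, (muR 3 n : ℝ) / (n : ℝ) ^ s)⁻¹
        = (∑' n : {n : ℕ // 0 < n ∧ ∀ p : ℕ, p.Prime →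
              n.factorization p % 6 ≠ 2 ∧ n.factorization p % 6 ≠ 5},
            ((-1 : ℝ) ^ mStar (n : ℕ)) / ((n : ℕ) : ℝ) ^ s) := by
  have hs0 : s ≠ 0 := by linarith
  have hinv : (rankMoebius 3 : ArithmeticFunction ℝ) * mu3Inv = 1 := by
    rw [← intCoe_mul, rankMoebius_three_mul_mu3Inv, intCoe_one]
  have hg_eq : ∀ n, 0 < n → g n = mu3Inv n := fun n hn =>
    eq_of_mul_eq_one_of_sum_divisors hinv hg hn
  rw [← tsum_mu3Inv_div_rpow hs0]
  refine ⟨tsum_congr fun n => ?_, ?_⟩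
  · rcases n.eq_zero_or_pos with rfl | hn
    · simp [Real.zero_rpow hs0]
    · rw [hg_eq n hn]
  · exact inv_eq_of_mul_eq_one_right (tsum_div_rpow_mul_tsum_div_rpow_of_mul_eq_one
      rankMoebius_three_mul_mu3Inv (abs_muR_le_one 3) abs_mu3Inv_le_one hs)
end
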